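/- arXiv:1003.3500 — 7 statements merged into one kernel-verified Lean document; each statement's English description precedes it below -/
import Mathlib

section
/- Let P(z) = c_0 + c_1 z + ... + c_n z^n be a polynomial with real coefficients satisfying c_n > c_{n-1} > ... > c_0 > 0. Then every complex root z of P satisfies |z| < 1. -/
/-!
Multiplying `∑ cᵢ zⁱ = 0` by `z - 1` gives `cₙ zⁿ⁺¹ = c₀ + ∑ (cᵢ₊₁ - cᵢ) zⁱ⁺¹`. When the
coefficients are nonnegative and nondecreasing, the triangle inequality bounds the right-hand side
by `cₙ ‖z‖ⁿ` for `‖z‖ ≥ 1`, which forces `‖z‖ ≤ 1`. If the coefficients increase strictly, then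
for some `ρ > 1` the coefficients `cᵢ / ρⁱ` are still nondecreasing, and `ρ z` is a root of the
corresponding sum; hence `ρ ‖z‖ ≤ 1` and `‖z‖ < 1`.
-/

open Finset Filter Topology

theorem sub_one_mul_sum_range_smul_pow {R A : Type*} [CommRing R] [CommRing A] [Algebra R A]
    (c : ℕ → R) (z : A) (n : ℕ) :
    (z - 1) * ∑ i ∈ range (n + 1), c i • z ^ i
      = c n • z ^ (n + 1) - (c 0 • 1 + ∑ i ∈ range n, (c (i + 1) - c i) • z ^ (i + 1)) := by
  induction n with
  | zero =>
    simp only [zero_add, sum_range_one, pow_zero, pow_one, range_zero, sum_empty, add_zero,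
      Algebra.smul_def, mul_one]
    ring
  | succ m ih =>
    rw [sum_range_succ (fun i => c i • z ^ i) (m + 1),
      sum_range_succ (fun i => (c (i + 1) - c i) • z ^ (i + 1)) m]
    simp only [Algebra.smul_def, map_sub] at ih ⊢
    linear_combination ih

section NormedAlgebra

variable {𝕜 : Type*} [NormedField 𝕜] [NormedAlgebra ℝ 𝕜] {c : ℕ → ℝ} {n : ℕ}

theorem norm_le_one_of_sum_smul_pow_eq_zero (h0 : 0 ≤ c 0) (hmono : ∀ i < n, c i ≤ c (i + 1))
    (hn : 0 < c n) {z : 𝕜} (hz : ∑ i ∈ range (n + 1), c i • z ^ i = 0) : ‖z‖ ≤ 1 := by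
  by_contra! hz1
  have hrel : c n • z ^ (n + 1) = c 0 • (1 : 𝕜) + ∑ i ∈ range n, (c (i + 1) - c i) • z ^ (i + 1) := by
    have := sub_one_mul_sum_range_smul_pow c z n
    rwa [hz, mul_zero, eq_comm, sub_eq_zero] at this
  have hbound : c n * ‖z‖ ^ (n + 1) ≤ c n * ‖z‖ ^ n :=
    calc c n * ‖z‖ ^ (n + 1)
        = ‖c 0 • (1 : 𝕜) + ∑ i ∈ range n, (c (i + 1) - c i) • z ^ (i + 1)‖ := by
          rw [← hrel, norm_smul, norm_pow, Real.norm_of_nonneg hn.le]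
      _ ≤ c 0 * ‖z‖ ^ n + ∑ i ∈ range n, (c (i + 1) - c i) * ‖z‖ ^ n := by
          refine (norm_add_le _ _).trans
            (add_le_add ?_ ((norm_sum_le _ _).trans (sum_le_sum fun i hi => ?_)))
          · rw [norm_smul, norm_one, mul_one, Real.norm_of_nonneg h0]
            exact le_mul_of_one_le_right h0 (one_le_pow₀ hz1.le)
          · have hstep := sub_nonneg.2 (hmono i (mem_range.1 hi))
            rw [norm_smul, norm_pow, Real.norm_of_nonneg hstep]
            exact mul_le_mul_of_nonneg_left (pow_le_pow_right₀ hz1.le (mem_range.1 hi)) hstep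
      _ = c n * ‖z‖ ^ n := by rw [← sum_mul, sum_range_sub, ← add_mul, add_sub_cancel]
  exact hbound.not_gt (mul_lt_mul_of_pos_left (pow_lt_pow_right₀ hz1 n.lt_succ_self) hn)

theorem exists_one_lt_forall_mul_lt (hinc : ∀ i < n, c i < c (i + 1)) :
    ∃ ρ > 1, ∀ i < n, ρ * c i < c (i + 1) := by
  have hnear : ∀ᶠ ρ in 𝓝 (1 : ℝ), ∀ i ∈ range n, ρ * c i < c (i + 1) := by
    refine (eventually_all_finset _).2 fun i hi => ?_
    have hlim : Tendsto (fun ρ : ℝ => ρ * c i) (𝓝 1) (𝓝 (c i)) := by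
      simpa using (tendsto_id (x := 𝓝 (1 : ℝ))).mul_const (c i)
    exact hlim.eventually (gt_mem_nhds (hinc i (mem_range.1 hi)))
  obtain ⟨ρ, hρc, hρ⟩ :=
    ((hnear.filter_mono nhdsWithin_le_nhds).and (self_mem_nhdsWithin (s := Set.Ioi 1))).exists
  exact ⟨ρ, hρ, fun i hi => hρc i (mem_range.2 hi)⟩

theorem norm_lt_one_of_sum_smul_pow_eq_zero (h0 : 0 ≤ c 0) (hinc : ∀ i < n, c i < c (i + 1))
    (hn : 0 < c n) {z : 𝕜} (hz : ∑ i ∈ range (n + 1), c i • z ^ i = 0) : ‖z‖ < 1 := by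
  obtain ⟨ρ, hρ, hρc⟩ := exists_one_lt_forall_mul_lt hinc
  have hρ0 : 0 < ρ := one_pos.trans hρ
  have hscaled : ‖ρ • z‖ ≤ 1 := by
    refine norm_le_one_of_sum_smul_pow_eq_zero (c := fun i => c i / ρ ^ i) (n := n)
      (by simpa using h0) (fun i hi => ?_) (div_pos hn (pow_pos hρ0 n)) ?_
    · rw [div_le_div_iff₀ (by positivity) (by positivity), pow_succ]
      nlinarith [hρc i hi, pow_pos hρ0 i]
    · simpa only [smul_pow, smul_smul, div_mul_cancel₀ _ (pow_ne_zero _ hρ0.ne')] using hz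
  rw [norm_smul, Real.norm_of_nonneg hρ0.le] at hscaled
  exact lt_of_mul_lt_mul_left (hscaled.trans_lt (by rwa [mul_one])) hρ0.le

end NormedAlgebra

theorem stmt3_general (P : Polynomial ℝ)
    (hpos : ∀ i, i ≤ P.natDegree → 0 < P.coeff i)
    (hinc : ∀ i, i < P.natDegree → P.coeff i < P.coeff (i + 1)) :
    ∀ z : ℂ, Polynomial.aeval z P = 0 → ‖z‖ < 1 := by
  intro z hz
  rw [Polynomial.aeval_eq_sum_range] at hz
  exact norm_lt_one_of_sum_smul_pow_eq_zero (hpos 0 P.natDegree.zero_le).le hinc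
    (hpos _ le_rfl) hz

/-- A real polynomial with strictly increasing positive coefficients has all its
complex roots inside the open unit disk (Eneström–Kakeya type result). -/
theorem stmt3 (P : Polynomial ℝ) (hdeg : 1 ≤ P.natDegree)
    (hpos : ∀ i, i ≤ P.natDegree → 0 < P.coeff i)
    (hinc : ∀ i, i < P.natDegree → P.coeff i < P.coeff (i + 1)) :
    ∀ z : ℂ, Polynomial.aeval z P = 0 → ‖z‖ < 1 :=
  stmt3_general P hpos hinc
end

section
/- Let m, n be positive integers with n ≤ m and suppose n is odd. Then for the dilation factor d=2, the polynomial P_{m,n}(y) = Σ_{j=0}^{n-1} C(m-1+j, j) y^j satisfies P_{m,n}(y) > 0 for all real y. -/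
/-!
On `y ≥ 0` every term is nonnegative and the constant term is `1`. For `y < 0` consider
`g(t) = (1 - t)^(k+1) P(t)`, where `P` is the degree `n - 1` Taylor polynomial of
`(1 - t)^(-(k+1))`. Differentiating, everything but the top term cancels:
`g'(t) = -(k + n) C(k+n-1, n-1) (1 - t)^k t^(n-1)`. For odd `n` the exponent `n - 1` is even,
so `g` is antitone on `(-∞, 1]`, whence `g(y) ≥ g(0) = 1`.
-/

open Finset Set

-- The paper's `P_{k+1,n}`; indexing by `k = m - 1` avoids truncated subtraction.
noncomputable def negBinomPartialSum (k n : ℕ) (y : ℝ) : ℝ :=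
  ∑ j ∈ range n, ((k + j).choose j : ℝ) * y ^ j

section

variable (k : ℕ)

lemma negBinomPartialSum_succ (n : ℕ) (y : ℝ) :
    negBinomPartialSum k (n + 1) y = negBinomPartialSum k n y + ((k + n).choose n : ℝ) * y ^ n :=
  sum_range_succ _ _

lemma negBinomPartialSum_apply_zero {n : ℕ} (hn : 0 < n) : negBinomPartialSum k n 0 = 1 := by
  rw [negBinomPartialSum, sum_eq_single_of_mem 0 (mem_range.mpr hn)]
  · simp
  · intro j _ hj
    simp [zero_pow hj]

lemma negBinomPartialSum_pos_of_nonneg {n : ℕ} (hn : 0 < n) {y : ℝ} (hy : 0 ≤ y) :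
    0 < negBinomPartialSum k n y :=
  sum_pos' (fun _ _ => by positivity) ⟨0, mem_range.mpr hn, by simp⟩

theorem hasDerivAt_one_sub_pow_mul_negBinomPartialSum (n : ℕ) (t : ℝ) :
    HasDerivAt (fun t => (1 - t) ^ (k + 1) * negBinomPartialSum k (n + 1) t)
      (-(((k + n + 1 : ℕ) * (k + n).choose n : ℝ) * (1 - t) ^ k * t ^ n)) t := by
  have hfactor :
      HasDerivAt (fun t : ℝ => (1 - t) ^ (k + 1)) ((k + 1 : ℕ) * (1 - t) ^ k * -1) t :=
    ((hasDerivAt_id t).const_sub 1).fun_pow (k + 1)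
  induction n with
  | zero => simpa [negBinomPartialSum] using hfactor
  | succ n ih =>
    simp only [negBinomPartialSum_succ k (n + 1), mul_add]
    refine (ih.fun_add (hfactor.fun_mul ((hasDerivAt_pow (n + 1) t).const_mul
      ((k + (n + 1)).choose (n + 1) : ℝ)))).congr_deriv ?_
    have hchoose : ((k + n + 1 : ℕ) * (k + n).choose n : ℝ)
        = (k + (n + 1)).choose (n + 1) * (n + 1 : ℕ) := by
      exact_mod_cast Nat.add_one_mul_choose_eq (k + n) n
    rw [hchoose, Nat.add_sub_cancel]
    push_cast
    ring

theorem antitoneOn_one_sub_pow_mul_negBinomPartialSum {n : ℕ} (hn : Even n) :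
    AntitoneOn (fun t => (1 - t) ^ (k + 1) * negBinomPartialSum k (n + 1) t) (Iic 1) := by
  have hderiv := hasDerivAt_one_sub_pow_mul_negBinomPartialSum k n
  refine antitoneOn_of_hasDerivWithinAt_nonpos (convex_Iic 1)
    (fun t _ => (hderiv t).continuousAt.continuousWithinAt)
    (fun t _ => (hderiv t).hasDerivWithinAt) fun t ht => ?_
  have hle : 0 ≤ 1 - t := sub_nonneg.mpr (mem_Iic.mp (interior_subset ht))
  have : 0 ≤ ((k + n + 1 : ℕ) * (k + n).choose n : ℝ) * (1 - t) ^ k * t ^ n := by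
    have := hn.pow_nonneg t
    positivity
  linarith

theorem negBinomPartialSum_pos_of_odd {n : ℕ} (hn : Odd n) (y : ℝ) :
    0 < negBinomPartialSum k n y := by
  obtain ⟨r, rfl⟩ := hn
  rcases le_or_gt 0 y with hy | hy
  · exact negBinomPartialSum_pos_of_nonneg k (by omega) hy
  have hg : 1 ≤ (1 - y) ^ (k + 1) * negBinomPartialSum k (2 * r + 1) y := by
    simpa [negBinomPartialSum_apply_zero k (Nat.succ_pos _)] using
      antitoneOn_one_sub_pow_mul_negBinomPartialSum k (even_two_mul r)
        (mem_Iic.mpr (by linarith)) (mem_Iic.mpr zero_le_one) hy.le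
  exact pos_of_mul_pos_right (by linarith) (pow_nonneg (by linarith) _)

end

theorem stmt4_general (m n : ℕ) (hodd : Odd n) :
    ∀ y : ℝ, 0 < ∑ j ∈ Finset.range n, ((m - 1 + j).choose j : ℝ) * y ^ j :=
  negBinomPartialSum_pos_of_odd (m - 1) hodd

/-- For d=2, n odd with 1 ≤ n ≤ m, P_{m,n}(y) = Σ_{j<n} C(m-1+j,j) y^j is
strictly positive on all of ℝ. -/
theorem stmt4 (m n : ℕ) (hm : 0 < m) (hn : 0 < n) (hnm : n ≤ m) (hodd : Odd n) :
    ∀ y : ℝ, 0 < ∑ j ∈ Finset.range n, ((m - 1 + j).choose j : ℝ) * y ^ j :=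
  stmt4_general m n hodd
end

section
/- For d=2 and positive integers m, n with n ≤ m, the derivative of P_{m,n}(y) = Σ_{j=0}^{n-1} C(m-1+j,j) y^j satisfies the identity (1-y) P'_{m,n}(y) = m [ P_{m,n}(y) - C(m+n-1, n-1) y^{n-1} ]. -/
lemma aux1 (m k : ℕ) (hm : 0 < m) :
    (k + 1) * (m - 1 + (k + 1)).choose (k + 1) = (m + k) * (m - 1 + k).choose k := by
  have h1 : m - 1 + (k + 1) = (m - 1 + k) + 1 := by omega
  have h2 : m + k = (m - 1 + k) + 1 := by omega
  rw [h1, h2]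
  simpa [Nat.succ_eq_add_one, mul_comm] using (Nat.add_one_mul_choose_eq (m - 1 + k) k).symm

lemma aux2 (m n : ℕ) (hm : 0 < m) (hn : 0 < n) :
    m * (m + n - 1).choose (n - 1) = (m + n - 1) * (m + n - 2).choose (n - 1) := by
  have e1 : n - 1 = (m + n - 1) - m := by omega
  have h1 : (m + n - 1).choose (n - 1) = (m + n - 1).choose m := by
    rw [e1, Nat.choose_symm (by omega)]
  have e2 : n - 1 = (m + n - 2) - (m - 1) := by omega
  have h2 : (m + n - 2).choose (n - 1) = (m + n - 2).choose (m - 1) := by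
    rw [e2, Nat.choose_symm (by omega)]
  rw [h1, h2]
  have h := (Nat.add_one_mul_choose_eq (m + n - 2) (m - 1)).symm
  have e3 : (m + n - 2) + 1 = m + n - 1 := by omega
  have e4 : (m - 1) + 1 = m := by omega
  simp only [Nat.succ_eq_add_one, e3, e4] at h
  rw [mul_comm]
  exact h

lemma key (m : ℕ) (hm : 0 < m) (k : ℕ) (y : ℝ) :
    (1 - y) * ∑ j ∈ Finset.range (k + 1), ((m - 1 + j).choose j : ℝ) * ((j : ℝ) * y ^ (j - 1))
      = m * (∑ j ∈ Finset.range (k + 1), ((m - 1 + j).choose j : ℝ) * y ^ j)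
        - ((m + k : ℕ) : ℝ) * ((m - 1 + k).choose k : ℝ) * y ^ k := by
  induction k with
  | zero => simp
  | succ k ih =>
      rw [Finset.sum_range_succ, Finset.sum_range_succ (f := fun j => ((m - 1 + j).choose j : ℝ) * y ^ j)]
      have hr : (((k + 1) * (m - 1 + (k + 1)).choose (k + 1) : ℕ) : ℝ)
          = (((m + k) * (m - 1 + k).choose k : ℕ) : ℝ) := by
        exact_mod_cast congrArg (Nat.cast : ℕ → ℝ) (aux1 m k hm)
      push_cast at hr ih ⊢
      linear_combination ih + y ^ k * hr

/-- For d=2: (1-y) P'_{m,n}(y) = m (P_{m,n}(y) - C(m+n-1, n-1) y^{n-1}). -/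
theorem stmt6 (m n : ℕ) (hm : 0 < m) (hn : 0 < n) (hnm : n ≤ m) :
    ∀ y : ℝ,
      (1 - y) * deriv (fun t : ℝ => ∑ j ∈ Finset.range n, ((m - 1 + j).choose j : ℝ) * t ^ j) y
        = m * ((∑ j ∈ Finset.range n, ((m - 1 + j).choose j : ℝ) * y ^ j)
            - ((m + n - 1).choose (n - 1) : ℝ) * y ^ (n - 1)) := by
  intro y
  have hd : HasDerivAt (fun t : ℝ => ∑ j ∈ Finset.range n, ((m - 1 + j).choose j : ℝ) * t ^ j)
      (∑ j ∈ Finset.range n, ((m - 1 + j).choose j : ℝ) * ((j : ℝ) * y ^ (j - 1))) y := by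
    apply HasDerivAt.fun_sum
    intro j _
    simpa using (hasDerivAt_pow j y).const_mul (((m - 1 + j).choose j : ℝ))
  rw [hd.deriv]
  have hk : n - 1 + 1 = n := Nat.sub_add_cancel hn
  have h := key m hm (n - 1) y
  rw [hk] at h
  rw [h]
  have e1 : m + (n - 1) = m + n - 1 := by omega
  have e2 : m - 1 + (n - 1) = m + n - 2 := by omega
  rw [e1, e2]
  have h2' := congrArg (Nat.cast (R := ℝ)) (aux2 m n hm hn).symm
  rw [Nat.cast_mul, Nat.cast_mul] at h2'
  linear_combination -y ^ (n - 1) * h2'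
end

section
/- For d=2, let y_0 < 0 be a real number with P'_{m,n}(y_0) = 0, where n is odd, 1 ≤ n ≤ m, and P_{m,n}(y) = Σ_{j=0}^{n-1} C(m-1+j,j) y^j. Then P_{m,n}(y_0) > 0. -/
open Polynomial in
private lemma stmt7_key (s : ℕ) : ∀ n, 0 < n → ∀ y : ℝ,
    (1 - y) * Polynomial.eval y (Polynomial.derivative
      (∑ j ∈ Finset.range n, Polynomial.C (((s + j).choose j : ℕ) : ℝ) * Polynomial.X ^ j))
    = (s + 1) * (Polynomial.eval y
        (∑ j ∈ Finset.range n, Polynomial.C (((s + j).choose j : ℕ) : ℝ) * Polynomial.X ^ j)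
        - (((s + n).choose (n - 1) : ℕ) : ℝ) * y ^ (n - 1)) := by
  intro n hn
  induction n, hn using Nat.le_induction with
  | base => intro y; simp
  | succ k hk ih =>
    obtain ⟨t, rfl⟩ : ∃ t, k = t + 1 := ⟨k - 1, by omega⟩
    intro y
    have h1n : (t + 1) * (s + t + 1).choose (t + 1) = (s + 1) * (s + t + 1).choose t := by
      have h := Nat.choose_succ_right_eq (s + t + 1) t
      rw [show s + t + 1 - t = s + 1 by omega] at h
      rw [mul_comm, h, mul_comm]
    have h1 : ((t : ℝ) + 1) * (((s + t + 1).choose (t + 1) : ℕ) : ℝ) =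
        ((s : ℝ) + 1) * (((s + t + 1).choose t : ℕ) : ℝ) := by exact_mod_cast h1n
    have h2 : (((s + t + 2).choose (t + 1) : ℕ) : ℝ) =
        (((s + t + 1).choose (t + 1) : ℕ) : ℝ) + (((s + t + 1).choose t : ℕ) : ℝ) := by
      have h : (s + t + 2).choose (t + 1) = (s + t + 1).choose t + (s + t + 1).choose (t + 1) :=
        Nat.choose_succ_succ (s + t + 1) t
      rw [h]; push_cast; ring
    have ihy := ih y
    rw [Finset.sum_range_succ]
    simp only [map_add, Polynomial.eval_add, Polynomial.derivative_mul,
      Polynomial.derivative_C, Polynomial.derivative_X_pow, Polynomial.eval_mul,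
      Polynomial.eval_C, Polynomial.eval_pow, Polynomial.eval_X, zero_mul, add_zero, zero_add,
      Polynomial.eval_zero, Polynomial.eval_natCast, Nat.add_sub_cancel,
      show s + (t + 1) = s + t + 1 from by omega,
      show s + (t + 1 + 1) = s + t + 2 from by omega,
      show t + 1 + 1 - 1 = t + 1 from by omega] at *
    push_cast
    linear_combination ihy + (y ^ t - y ^ (t + 1)) * h1 + ((s : ℝ) + 1) * y ^ (t + 1) * h2

/-- For d=2, n odd, 1 ≤ n ≤ m: at any negative stationary point y₀ of P_{m,n},
the value P_{m,n}(y₀) is strictly positive. -/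
theorem stmt7 (m n : ℕ) (hm : 0 < m) (hn : 0 < n) (hnm : n ≤ m) (hodd : Odd n)
    (y₀ : ℝ) (hy₀ : y₀ < 0)
    (hstat : deriv (fun t : ℝ => ∑ j ∈ Finset.range n, ((m - 1 + j).choose j : ℝ) * t ^ j) y₀ = 0) :
    0 < ∑ j ∈ Finset.range n, ((m - 1 + j).choose j : ℝ) * y₀ ^ j := by
  obtain ⟨s, rfl⟩ := Nat.exists_eq_succ_of_ne_zero hm.ne'
  simp only [Nat.succ_sub_one] at *
  set p : Polynomial ℝ :=
    ∑ j ∈ Finset.range n, Polynomial.C (((s + j).choose j : ℕ) : ℝ) * Polynomial.X ^ j with hp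
  have hfun : (fun t : ℝ => ∑ j ∈ Finset.range n, ((s + j).choose j : ℝ) * t ^ j)
      = fun t => Polynomial.eval t p := by
    funext t
    simp [hp, Polynomial.eval_finset_sum]
  have hd : Polynomial.eval y₀ (Polynomial.derivative p) = 0 := by
    rw [← Polynomial.deriv, ← hfun]; exact hstat
  have hkey := stmt7_key s n hn y₀
  rw [hd, mul_zero] at hkey
  have hs1 : (0 : ℝ) < (s : ℝ) + 1 := by positivity
  have hPeq : Polynomial.eval y₀ p = (((s + n).choose (n - 1) : ℕ) : ℝ) * y₀ ^ (n - 1) := by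
    have := (mul_eq_zero.mp hkey.symm).resolve_left (by positivity)
    linarith
  have heven : Even (n - 1) := Nat.Odd.sub_odd hodd odd_one
  have hpow : 0 < y₀ ^ (n - 1) := heven.pow_pos hy₀.ne
  have hc : 0 < (((s + n).choose (n - 1) : ℕ) : ℝ) := by
    exact_mod_cast Nat.choose_pos (by omega)
  have : 0 < Polynomial.eval y₀ p := by rw [hPeq]; positivity
  calc (0:ℝ) < Polynomial.eval y₀ p := this
    _ = ∑ j ∈ Finset.range n, ((s + j).choose j : ℝ) * y₀ ^ j := by
        have := congrFun hfun y₀; rw [← this]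
end

section
/- For d=2 and positive integers m, n with 2n-1 ≤ m, the quantity 1 - |â_0(ξ)|² - |â_0(ξ+π)|² is nonnegative for all real ξ, where |â_0(ξ)|² = cos^{2m}(ξ/2) P_{m,2n-1}(sin²(ξ/2)). -/
open Finset

lemma hdouble (k : ℕ) : (2*k+2).choose (k+1) = 2 * ((2*k+1).choose (k+1)) := by
  have h1 : (2*k+1+1).choose (k+1) = (2*k+1).choose k + (2*k+1).choose (k+1) :=
    Nat.choose_succ_succ (2*k+1) k
  have h2 : (2*k+1).choose k = (2*k+1).choose (k+1) := by
    have h3 := Nat.choose_symm (show k+1 ≤ 2*k+1 by omega)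
    have h4 : 2*k+1-(k+1) = k := by omega
    rw [h4] at h3
    omega
  rw [show 2*k+1+1 = 2*k+2 from rfl] at h1
  omega

lemma step (k : ℕ) (x : ℝ) :
    (1 - x) * (∑ j ∈ Finset.range (k+2), ((k+1+j).choose j : ℝ) * x ^ j)
      = (∑ j ∈ Finset.range (k+1), ((k+j).choose j : ℝ) * x ^ j)
        + ((2*k+1).choose (k+1) : ℝ) * x ^ (k+1) * (1 - 2*x) := by
  set S : ℝ := ∑ j ∈ Finset.range (k+2), ((k+1+j).choose j : ℝ) * x ^ j with hSdef
  set Q : ℝ := ∑ j ∈ Finset.range (k+1), ((k+j).choose j : ℝ) * x ^ j with hQdef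
  have hpeel : S = (∑ j ∈ Finset.range (k+1), ((k+1+(j+1)).choose (j+1) : ℝ) * x ^ (j+1)) + 1 := by
    rw [hSdef, Finset.sum_range_succ']
    simp
  have hpascal : ∀ j, ((k+1+(j+1)).choose (j+1) : ℝ)
      = ((k+1+j).choose (j+1) : ℝ) + ((k+1+j).choose j : ℝ) := by
    intro j
    have : (k+1+j+1).choose (j+1) = (k+1+j).choose j + (k+1+j).choose (j+1) :=
      Nat.choose_succ_succ (k+1+j) j
    have h2 : (k+1+(j+1)) = (k+1+j+1) := by ring
    rw [h2, this]; push_cast; ring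
  have hsplit : S = (∑ j ∈ Finset.range (k+1), ((k+1+j).choose (j+1) : ℝ) * x ^ (j+1))
      + (∑ j ∈ Finset.range (k+1), ((k+1+j).choose j : ℝ) * x ^ (j+1)) + 1 := by
    rw [hpeel, ← Finset.sum_add_distrib]
    congr 1
    apply Finset.sum_congr rfl
    intro j _
    rw [hpascal j]; ring
  -- first sum
  have hfirst : (∑ j ∈ Finset.range (k+1), ((k+1+j).choose (j+1) : ℝ) * x ^ (j+1))
      = Q + ((2*k+1).choose (k+1) : ℝ) * x ^ (k+1) - 1 := by
    have h3 : (∑ j ∈ Finset.range (k+2), ((k+j).choose j : ℝ) * x ^ j)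
        = (∑ j ∈ Finset.range (k+1), ((k+(j+1)).choose (j+1) : ℝ) * x ^ (j+1)) + 1 := by
      rw [Finset.sum_range_succ']
      simp
    have h4 : (∑ j ∈ Finset.range (k+2), ((k+j).choose j : ℝ) * x ^ j)
        = Q + ((k+(k+1)).choose (k+1) : ℝ) * x ^ (k+1) := Finset.sum_range_succ _ _
    have h5 : ∀ j : ℕ, k+(j+1) = k+1+j := fun j => by ring
    have h6 : k+(k+1) = 2*k+1 := by ring
    rw [h6] at h4
    calc (∑ j ∈ Finset.range (k+1), ((k+1+j).choose (j+1) : ℝ) * x ^ (j+1))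
        = (∑ j ∈ Finset.range (k+1), ((k+(j+1)).choose (j+1) : ℝ) * x ^ (j+1)) := by
          apply Finset.sum_congr rfl; intro j _; rw [h5 j]
      _ = (∑ j ∈ Finset.range (k+2), ((k+j).choose j : ℝ) * x ^ j) - 1 := by rw [h3]; ring
      _ = Q + ((2*k+1).choose (k+1) : ℝ) * x ^ (k+1) - 1 := by rw [h4]
  -- second sum
  have hsecond : (∑ j ∈ Finset.range (k+1), ((k+1+j).choose j : ℝ) * x ^ (j+1))
      = x * (S - ((2*k+2).choose (k+1) : ℝ) * x ^ (k+1)) := by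
    have h4 : S = (∑ j ∈ Finset.range (k+1), ((k+1+j).choose j : ℝ) * x ^ j)
        + ((k+1+(k+1)).choose (k+1) : ℝ) * x ^ (k+1) := Finset.sum_range_succ _ _
    have h6 : k+1+(k+1) = 2*k+2 := by ring
    rw [h6] at h4
    have h7 : S - ((2*k+2).choose (k+1) : ℝ) * x ^ (k+1)
        = ∑ j ∈ Finset.range (k+1), ((k+1+j).choose j : ℝ) * x ^ j := by rw [h4]; ring
    rw [h7, Finset.mul_sum]
    apply Finset.sum_congr rfl
    intro j _; ring
  have hd : ((2*k+2).choose (k+1) : ℝ) = 2 * ((2*k+1).choose (k+1) : ℝ) := by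
    exact_mod_cast congrArg (Nat.cast : ℕ → ℝ) (hdouble k)
  have key : S = (Q + ((2*k+1).choose (k+1) : ℝ) * x ^ (k+1) - 1)
      + x * (S - ((2*k+2).choose (k+1) : ℝ) * x ^ (k+1)) + 1 := by
    rw [← hfirst, ← hsecond]; exact hsplit
  rw [hd] at key
  linear_combination key

lemma key_id (k : ℕ) (x : ℝ) :
    (1-x)^(k+1) * (∑ j ∈ Finset.range (k+1), ((k+j).choose j : ℝ) * x^j)
      + x^(k+1) * (∑ j ∈ Finset.range (k+1), ((k+j).choose j : ℝ) * (1-x)^j) = 1 := by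
  induction k with
  | zero => simp
  | succ k ih =>
    have h1 := step k x
    have h2 := step k (1-x)
    rw [show (1 - (1-x)) = x from by ring] at h2
    have hk : k+1+1 = k+2 := rfl
    rw [hk]
    linear_combination ih + (1-x)^(k+1) * h1 + x^(k+1) * h2

/-- For d=2 and 2n-1 ≤ m: with |â₀(ξ)|² = cos^{2m}(ξ/2) P_{m,2n-1}(sin²(ξ/2)),
the quantity 1 - |â₀(ξ)|² - |â₀(ξ+π)|² is nonnegative for all ξ. -/
theorem stmt13 (m n : ℕ) (hn : 0 < n) (hnm : 2 * n - 1 ≤ m) :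
    ∀ ξ : ℝ,
      0 ≤ 1 -
        (Real.cos (ξ / 2) ^ (2 * m) *
          ∑ j ∈ Finset.range (2 * n - 1), ((m - 1 + j).choose j : ℝ) * (Real.sin (ξ / 2) ^ 2) ^ j) -
        (Real.cos ((ξ + Real.pi) / 2) ^ (2 * m) *
          ∑ j ∈ Finset.range (2 * n - 1),
            ((m - 1 + j).choose j : ℝ) * (Real.sin ((ξ + Real.pi) / 2) ^ 2) ^ j) := by
  intro ξ
  obtain ⟨k, rfl⟩ : ∃ k, m = k + 1 := ⟨m - 1, by omega⟩
  set x : ℝ := Real.sin (ξ/2) ^ 2 with hxdef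
  have hx0 : 0 ≤ x := sq_nonneg _
  have hcos : Real.cos (ξ/2) ^ 2 = 1 - x := by
    rw [hxdef, Real.cos_sq']
  have hx1 : x ≤ 1 := by nlinarith [sq_nonneg (Real.cos (ξ/2))]
  have h1x : 0 ≤ 1 - x := by linarith
  have hshift : (ξ + Real.pi)/2 = ξ/2 + Real.pi/2 := by ring
  have hcos2 : Real.cos ((ξ + Real.pi)/2) ^ 2 = x := by
    rw [hshift, Real.cos_add_pi_div_two, hxdef]; ring
  have hsin2 : Real.sin ((ξ + Real.pi)/2) ^ 2 = 1 - x := by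
    rw [hshift, Real.sin_add_pi_div_two, hcos]
  have hpow1 : Real.cos (ξ/2) ^ (2*(k+1)) = (1-x)^(k+1) := by
    rw [pow_mul, hcos]
  have hpow2 : Real.cos ((ξ + Real.pi)/2) ^ (2*(k+1)) = x^(k+1) := by
    rw [pow_mul, hcos2]
  rw [hpow1, hpow2, hsin2]
  simp only [Nat.add_sub_cancel]
  have hsub : Finset.range (2*n-1) ⊆ Finset.range (k+1) := Finset.range_subset_range.mpr hnm
  have hT1 : (∑ j ∈ Finset.range (2*n-1), ((k+j).choose j : ℝ) * x^j)
      ≤ ∑ j ∈ Finset.range (k+1), ((k+j).choose j : ℝ) * x^j := by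
    apply Finset.sum_le_sum_of_subset_of_nonneg hsub
    intro j _ _
    positivity
  have hT2 : (∑ j ∈ Finset.range (2*n-1), ((k+j).choose j : ℝ) * (1-x)^j)
      ≤ ∑ j ∈ Finset.range (k+1), ((k+j).choose j : ℝ) * (1-x)^j := by
    apply Finset.sum_le_sum_of_subset_of_nonneg hsub
    intro j _ _
    have : (0:ℝ) ≤ (1-x)^j := pow_nonneg h1x j
    positivity
  have hA : (0:ℝ) ≤ (1-x)^(k+1) := pow_nonneg h1x _
  have hB : (0:ℝ) ≤ x^(k+1) := pow_nonneg hx0 _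
  have hk := key_id k x
  have m1 := mul_le_mul_of_nonneg_left hT1 hA
  have m2 := mul_le_mul_of_nonneg_left hT2 hB
  linarith
end

section
/- For d=2 and m = 2n, the residual 1 - (1-x)^{2n} P_{2n,2n-1}(x) - x^{2n} P_{2n,2n-1}(1-x) equals C(4n-2, 2n-1) · (x(1-x))^{2n-1} for all real x. -/
open Finset

noncomputable def Tfun (m : ℕ) (x : ℝ) : ℝ :=
  ∑ j ∈ Finset.range (m + 1), ((m + j).choose j : ℝ) * x ^ j

lemma Tfun_rec (m : ℕ) (x : ℝ) :
    (1 - x) * Tfun (m + 1) x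
      = Tfun m x + ((2 * m + 1).choose (m + 1) : ℝ) * x ^ (m + 1)
        - ((2 * m + 2).choose (m + 1) : ℝ) * x ^ (m + 2) := by
  unfold Tfun
  rw [sub_mul, one_mul, Finset.mul_sum]
  rw [Finset.sum_range_succ' (fun j => ((m + 1 + j).choose j : ℝ) * x ^ j)]
  rw [Finset.sum_range_succ (fun j => x * (((m + 1 + j).choose j : ℝ) * x ^ j))]
  have step : ∑ j ∈ Finset.range (m + 1), ((m + 1 + (j + 1)).choose (j + 1) : ℝ) * x ^ (j + 1)
      - ∑ j ∈ Finset.range (m + 1), x * (((m + 1 + j).choose j : ℝ) * x ^ j)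
      = ∑ j ∈ Finset.range (m + 1), ((m + 1 + j).choose (j + 1) : ℝ) * x ^ (j + 1) := by
    rw [← Finset.sum_sub_distrib]
    refine Finset.sum_congr rfl fun j _ => ?_
    have h : (m + 1 + (j + 1)).choose (j + 1)
        = (m + 1 + j).choose j + (m + 1 + j).choose (j + 1) := by
      have e : m + 1 + (j + 1) = (m + 1 + j) + 1 := by ring
      rw [e, Nat.choose_succ_succ]
    have h' : ((m + 1 + (j + 1)).choose (j + 1) : ℝ)
        = ((m + 1 + j).choose j : ℝ) + ((m + 1 + j).choose (j + 1) : ℝ) := by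
      exact_mod_cast congrArg (Nat.cast : ℕ → ℝ) h
    rw [h']; ring
  have hsum : ∑ j ∈ Finset.range (m + 1), ((m + j).choose j : ℝ) * x ^ j
        + ((2 * m + 1).choose (m + 1) : ℝ) * x ^ (m + 1)
      = (((m + 1 + 0).choose 0 : ℕ) : ℝ) * x ^ 0
        + ∑ j ∈ Finset.range (m + 1), ((m + 1 + j).choose (j + 1) : ℝ) * x ^ (j + 1) := by
    have e1 : ∑ j ∈ Finset.range (m + 2), ((m + j).choose j : ℝ) * x ^ j
        = ∑ j ∈ Finset.range (m + 1), ((m + j).choose j : ℝ) * x ^ j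
          + ((m + (m + 1)).choose (m + 1) : ℝ) * x ^ (m + 1) :=
      Finset.sum_range_succ _ _
    have e2 : ∑ j ∈ Finset.range (m + 2), ((m + j).choose j : ℝ) * x ^ j
        = ∑ j ∈ Finset.range (m + 1), ((m + (j + 1)).choose (j + 1) : ℝ) * x ^ (j + 1)
          + (((m + 0).choose 0 : ℕ) : ℝ) * x ^ 0 :=
      Finset.sum_range_succ' _ _
    have e3 : ∀ j : ℕ, (m + (j + 1)).choose (j + 1) = (m + 1 + j).choose (j + 1) := by
      intro j; congr 1; ring
    have e4 : (m + (m + 1)).choose (m + 1) = (2 * m + 1).choose (m + 1) := by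
      congr 1; ring
    simp only [e3] at e2
    rw [e4] at e1
    rw [← e1, e2]
    simp [add_comm]
  have e5 : ((m + 1 + (m + 1)).choose (m + 1) : ℝ) = ((2 * m + 2).choose (m + 1) : ℝ) := by
    norm_cast; congr 1; ring
  linear_combination step - hsum - x ^ (m + 1) * x * e5

lemma key_s14 (m : ℕ) (x : ℝ) :
    (1 - x) ^ (m + 1) * Tfun m x + x ^ (m + 1) * Tfun m (1 - x) = 1 := by
  induction m with
  | zero => simp [Tfun]
  | succ m ih =>
    have h1 := Tfun_rec m x
    have h2 := Tfun_rec m (1 - x)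
    rw [show (1 : ℝ) - (1 - x) = x by ring] at h2
    have hx : (1 - x) ^ (m + 2) * Tfun (m + 1) x
        = (1 - x) ^ (m + 1) * ((1 - x) * Tfun (m + 1) x) := by ring
    have hy : x ^ (m + 2) * Tfun (m + 1) (1 - x)
        = x ^ (m + 1) * (x * Tfun (m + 1) (1 - x)) := by ring
    rw [hx, hy, h1, h2]
    have hdouble : ((2 * m + 2).choose (m + 1) : ℝ)
        = 2 * ((2 * m + 1).choose (m + 1) : ℝ) := by
      have h3 : (2 * m + 2).choose (m + 1)
          = (2 * m + 1).choose m + (2 * m + 1).choose (m + 1) :=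
        Nat.choose_succ_succ (2 * m + 1) m
      have h4 : (2 * m + 1).choose m = (2 * m + 1).choose (m + 1) := by
        have := Nat.choose_symm (show m + 1 ≤ 2 * m + 1 by omega)
        simpa [show 2 * m + 1 - (m + 1) = m by omega] using this
      push_cast [h3, h4]; ring
    linear_combination ih - (1 - x) ^ (m + 1) * x ^ (m + 1) * hdouble

/-- For d=2 and m = 2n: the residual
1 - (1-x)^{2n} P_{2n,2n-1}(x) - x^{2n} P_{2n,2n-1}(1-x) = C(4n-2, 2n-1) (x(1-x))^{2n-1}. -/
theorem stmt14 (n : ℕ) (hn : 0 < n) :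
    ∀ x : ℝ,
      1 - (1 - x) ^ (2 * n) *
            (∑ j ∈ Finset.range (2 * n - 1), ((2 * n - 1 + j).choose j : ℝ) * x ^ j)
        - x ^ (2 * n) *
            (∑ j ∈ Finset.range (2 * n - 1), ((2 * n - 1 + j).choose j : ℝ) * (1 - x) ^ j)
      = ((4 * n - 2).choose (2 * n - 1) : ℝ) * (x * (1 - x)) ^ (2 * n - 1) := by
  intro x
  obtain ⟨k, rfl⟩ : ∃ k, n = k + 1 := ⟨n - 1, by omega⟩
  have hm : 2 * (k + 1) - 1 = 2 * k + 1 := by omega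
  have hm2 : 2 * (k + 1) = (2 * k + 1) + 1 := by omega
  have hb : 4 * (k + 1) - 2 = 2 * (2 * k + 1) := by omega
  rw [hm, hm2, hb]
  have hk := key_s14 (2 * k + 1) x
  unfold Tfun at hk
  rw [Finset.sum_range_succ (fun j => ((2 * k + 1 + j).choose j : ℝ) * x ^ j)] at hk
  rw [Finset.sum_range_succ (fun j => ((2 * k + 1 + j).choose j : ℝ) * (1 - x) ^ j)] at hk
  have htop : ((2 * k + 1 + (2 * k + 1)).choose (2 * k + 1) : ℝ)
      = ((2 * (2 * k + 1)).choose (2 * k + 1) : ℝ) := by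
    norm_cast; congr 1; ring
  rw [htop] at hk
  have hp : x ^ (2 * k + 1 + 1) = x ^ (2 * k + 1) * x := pow_succ x _
  have hq : (1 - x) ^ (2 * k + 1 + 1) = (1 - x) ^ (2 * k + 1) * (1 - x) := pow_succ _ _
  rw [hp, hq] at hk ⊢
  rw [mul_pow]
  linear_combination -hk
end

section
/- Let z_j = ρ e^{i(θ + 2πj/d)} for j = 0, ..., d-1, where ρ > 0 and θ ∈ ℝ, and d ≥ 2. Then max_{0 ≤ j ≤ d-1} | (1 - z_j)² / (2 z_j) | ≥ 1. -/
/-! With `z = ρ e^{ix}` one has `|(1 - z)² / (2z)| = (ρ² + 1)/(2ρ) - cos x ≥ 1 - cos x`.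
The angles `θ + 2πj/d` are the arguments of `e^{iθ}` times the `d`-th roots of unity, whose sum
vanishes for `d ≥ 2`; hence their cosines sum to `0` and one of them is `≤ 0`. -/

open Real Complex

theorem sum_range_cos_add_two_pi_mul_div (d : ℕ) (hd : 2 ≤ d) (θ : ℝ) :
    ∑ j ∈ Finset.range d, Real.cos (θ + 2 * π * j / d) = 0 := by
  have hterm (j : ℕ) : Real.cos (θ + 2 * π * j / d) =
      (cexp (θ * I) * cexp (2 * π * I / d) ^ j).re := by
    rw [← Complex.exp_nat_mul, ← Complex.exp_add, ← exp_ofReal_mul_I_re]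
    congr 2
    push_cast
    ring
  simp only [hterm, ← re_sum, ← Finset.mul_sum,
    (isPrimitiveRoot_exp d (by omega)).geom_sum_eq_zero hd, mul_zero, zero_re]

theorem exists_cos_add_two_pi_mul_div_nonpos (d : ℕ) (hd : 2 ≤ d) (θ : ℝ) :
    ∃ j ∈ Finset.range d, Real.cos (θ + 2 * π * j / d) ≤ 0 :=
  Finset.exists_le_of_sum_le (Finset.nonempty_range_iff.mpr (by omega))
    (by simp [sum_range_cos_add_two_pi_mul_div d hd θ])

theorem norm_one_sub_sq_div_two_mul_eq {ρ : ℝ} (hρ : 0 < ρ) (x : ℝ) :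
    ‖(1 - ρ * cexp (x * I)) ^ 2 / (2 * (ρ * cexp (x * I)))‖ =
      (ρ ^ 2 + 1) / (2 * ρ) - Real.cos x := by
  have hnorm_sq : ‖1 - ρ * cexp (x * I)‖ ^ 2 = ρ ^ 2 + 1 - 2 * ρ * Real.cos x := by
    rw [Complex.sq_norm, normSq_apply]
    simp only [sub_re, sub_im, one_re, one_im, re_ofReal_mul, im_ofReal_mul,
      exp_ofReal_mul_I_re, exp_ofReal_mul_I_im]
    nlinarith [Real.sin_sq_add_cos_sq x]
  rw [norm_div, norm_pow, hnorm_sq, norm_mul, norm_mul, norm_exp_ofReal_mul_I, norm_real,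
    Real.norm_of_nonneg hρ.le]
  field_simp
  norm_num
  ring

theorem one_le_sq_add_one_div_two_mul {ρ : ℝ} (hρ : 0 < ρ) : 1 ≤ (ρ ^ 2 + 1) / (2 * ρ) := by
  rw [le_div_iff₀ (by positivity)]
  nlinarith [sq_nonneg (ρ - 1)]

open Real in
/-- For z_j = ρ e^{i(θ + 2πj/d)}, j = 0,...,d-1, with ρ > 0 and d ≥ 2, some j
satisfies |(1-z_j)²/(2z_j)| ≥ 1. -/
theorem stmt15 (d : ℕ) (hd : 2 ≤ d) (ρ θ : ℝ) (hρ : 0 < ρ) :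
    ∃ j ∈ Finset.range d,
      1 ≤ ‖((1 - (ρ : ℂ) * Complex.exp (Complex.I * (θ + 2 * Real.pi * j / d))) ^ 2 /
            (2 * ((ρ : ℂ) * Complex.exp (Complex.I * (θ + 2 * Real.pi * j / d)))))‖ := by
  obtain ⟨j, hj, hcos⟩ := exists_cos_add_two_pi_mul_div_nonpos d hd θ
  refine ⟨j, hj, ?_⟩
  have harg : Complex.I * (θ + 2 * Real.pi * j / d) = ((θ + 2 * π * j / d : ℝ) : ℂ) * I := by
    push_cast
    ring
  rw [harg, norm_one_sub_sq_div_two_mul_eq hρ]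
  linarith [one_le_sq_add_one_div_two_mul hρ]
end
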